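/- Let D be a rooted digraph such that all in-balls and out-balls of finite radius around vertices are finite. Then every elliptic self-embedding of D (one fixing a finite nonempty vertex set setwise) is surjective, hence an automorphism of D. -/
import Mathlib


/-- There is a directed walk of length at most `n` from `x` to `y` along the edge relation `E`. -/
def StepsLe {V : Type*} (E : V → V → Prop) : ℕ → V → V → Prop
  | 0, x, y => x = y
  | n + 1, x, y => x = y ∨ ∃ z, E x z ∧ StepsLe E n z y

/-- The directed distance in the digraph with edge relation `E`, with value `⊤` if there is
no directed path. -/
noncomputable def ddist {V : Type*} (E : V → V → Prop) (x y : V) : ℕ∞ :=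
  sInf {m : ℕ∞ | ∃ n : ℕ, m = (n : ℕ∞) ∧ StepsLe E n x y}

lemma stepsLe_map {V : Type*} {E : V → V → Prop} {g : V → V}
    (hg_adj : ∀ x y, E x y ↔ E (g x) (g y)) :
    ∀ (n : ℕ) (x y : V), StepsLe E n x y → StepsLe E n (g x) (g y) := by
  intro n
  induction n with
  | zero => intro x y h; exact congrArg g h
  | succ n ih =>
    intro x y h
    rcases h with h | ⟨z, hxz, hzy⟩
    · exact Or.inl (congrArg g h)
    · exact Or.inr ⟨g z, (hg_adj x z).mp hxz, ih z y hzy⟩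

lemma ddist_map_le {V : Type*} {E : V → V → Prop} {g : V → V}
    (hg_adj : ∀ x y, E x y ↔ E (g x) (g y)) (x y : V) :
    ddist E (g x) (g y) ≤ ddist E x y := by
  apply sInf_le_sInf
  rintro m ⟨n, rfl, h⟩
  exact ⟨n, rfl, stepsLe_map hg_adj n x y h⟩

/-- Every elliptic self-embedding of a rooted digraph with finite balls is surjective,
hence an automorphism. -/
theorem stmt4 {V : Type*} (E : V → V → Prop) (o : V)
    (hroot : ∀ v : V, ddist E o v ≠ ⊤)
    (hballs : ∀ (v : V) (n : ℕ),
      {w : V | ddist E v w ≤ (n : ℕ∞)}.Finite ∧ {w : V | ddist E w v ≤ (n : ℕ∞)}.Finite)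
    (g : V → V) (hg_inj : Function.Injective g)
    (hg_adj : ∀ x y, E x y ↔ E (g x) (g y))
    (hell : ∃ F : Set V, F.Finite ∧ F.Nonempty ∧ g '' F = F) :
    Function.Surjective g ∧ Function.Bijective g := by
  obtain ⟨F, hFfin, ⟨a, haF⟩, hGF⟩ := hell
  have hsurj : Function.Surjective g := by
    intro v
    obtain ⟨m, hm⟩ := (WithTop.ne_top_iff_exists).mp (hroot a)
    obtain ⟨k, hk⟩ := (WithTop.ne_top_iff_exists).mp (hroot v)
    set S : Set V := {w | ∃ a' ∈ F, ∃ c, ddist E c a' ≤ (m : ℕ∞) ∧ ddist E c w ≤ (k : ℕ∞)}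
      with hS
    have hSfin : S.Finite := by
      apply Set.Finite.subset
        (Set.Finite.biUnion hFfin (fun a' _ =>
          Set.Finite.biUnion (hballs a' m).2 (fun c _ => (hballs c k).1)))
      rintro w ⟨a', ha', c, h1, h2⟩
      exact Set.mem_biUnion ha' (Set.mem_biUnion h1 h2)
    have hmaps : Set.MapsTo g S S := by
      rintro w ⟨a', ha', c, h1, h2⟩
      exact ⟨g a', hGF ▸ ⟨a', ha', rfl⟩, g c,
        le_trans (ddist_map_le hg_adj c a') h1,
        le_trans (ddist_map_le hg_adj c w) h2⟩
    have hvS : v ∈ S := ⟨a, haF, o, le_of_eq hm.symm, le_of_eq hk.symm⟩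
    have hbij := (hSfin.injOn_iff_bijOn_of_mapsTo hmaps).mp hg_inj.injOn
    obtain ⟨w, _, hw⟩ := hbij.surjOn hvS
    exact ⟨w, hw⟩
  exact ⟨hsurj, hg_inj, hsurj⟩
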